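/- arXiv:1807.04152 — 3 statements merged into one kernel-verified Lean document; each statement's English description precedes it below -/
import Mathlib

section
/- Let v : R → ℝ≥0, λ > 0, and let S, S' ⊆ R be two minimal sets with total value at least λ (all elements thin: v r < λ) such that S ∩ S' ≠ ∅ and every element of S ∪ S' has value greater than λ/2. Then |S ∪ S'| ≤ 3, and hence ∑_{r ∈ S∪S'} min(v r, 5λ/6) ≤ 5λ/2. -/
theorem stmt_6 {ι : Type*} [DecidableEq ι] (R : Finset ι) (lam : ℝ) (hlam : 0 < lam)
    (v : ι → ℝ) (hv0 : ∀ r ∈ R, 0 ≤ v r)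
    (S S' : Finset ι) (hS : S ⊆ R) (hS' : S' ⊆ R)
    (hthin : ∀ r ∈ S ∪ S', v r < lam)
    (hbig : ∀ r ∈ S ∪ S', lam / 2 < v r)
    (hvalS : lam ≤ ∑ r ∈ S, v r)
    (hvalS' : lam ≤ ∑ r ∈ S', v r)
    (hminS : ∀ r ∈ S, ∑ r' ∈ S.erase r, v r' < lam)
    (hminS' : ∀ r ∈ S', ∑ r' ∈ S'.erase r, v r' < lam)
    (hinter : (S ∩ S').Nonempty) :
    (S ∪ S').card ≤ 3 ∧ ∑ r ∈ S ∪ S', min (v r) (5 * lam / 6) ≤ 5 * lam / 2 := by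
  have key : ∀ (T : Finset ι), T ⊆ S ∪ S' → (∀ r ∈ T, ∑ r' ∈ T.erase r, v r' < lam) →
      T.card ≤ 2 := by
    intro T hTsub hmin
    by_contra h
    push_neg at h
    obtain ⟨r, hr⟩ := Finset.card_pos.mp (by omega : 0 < T.card)
    have hcard : 2 ≤ (T.erase r).card := by
      have := Finset.card_erase_of_mem hr; omega
    have hne : (T.erase r).Nonempty := Finset.card_pos.mp (by omega)
    have hlt : (T.erase r).card • (lam / 2) < ∑ r' ∈ T.erase r, v r' := by
      have := Finset.sum_lt_sum_of_nonempty hne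
        (f := fun _ => lam / 2) (g := v)
        (fun i hi => hbig i (hTsub (Finset.mem_of_mem_erase hi)))
      simpa using this
    have : lam ≤ (T.erase r).card • (lam / 2) := by
      calc lam = 2 * (lam / 2) := by ring
        _ ≤ (T.erase r).card * (lam / 2) := by
            apply mul_le_mul_of_nonneg_right _ (by linarith)
            exact_mod_cast hcard
        _ = (T.erase r).card • (lam / 2) := by simp [nsmul_eq_mul]
    exact absurd (hmin r hr) (by linarith)
  have hcS : S.card ≤ 2 := key S Finset.subset_union_left hminS
  have hcS' : S'.card ≤ 2 := key S' Finset.subset_union_right hminS'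
  have hci : 1 ≤ (S ∩ S').card := Finset.card_pos.mpr hinter
  have hcu : (S ∪ S').card ≤ 3 := by
    have := Finset.card_union_add_card_inter S S'
    omega
  refine ⟨hcu, ?_⟩
  calc ∑ r ∈ S ∪ S', min (v r) (5 * lam / 6)
      ≤ (S ∪ S').card • (5 * lam / 6) := by
        apply Finset.sum_le_card_nsmul
        intro i _; exact min_le_right _ _
    _ ≤ 3 * (5 * lam / 6) := by
        rw [nsmul_eq_mul]
        apply mul_le_mul_of_nonneg_right _ (by linarith)
        exact_mod_cast hcu
    _ ≤ 5 * lam / 2 := by linarith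
end

section
/- Let C be a finite set of resources with values v : C → ℝ≥0 and total value at least 1, all values less than λ = 6/23. Let B ⊆ C with ∑_{r ∈ C\B} v r < λ. Then ∑_{r∈B} min(v r, 5λ/6) ≥ 1 - 4λ/3. -/
open Finset

section Capping

variable {ι : Type*} (B : Finset ι) (v : ι → ℝ) (c : ℝ)

theorem card_filter_le_mul_le_sum_min (hc : 0 ≤ c) (hv : ∀ r ∈ B, 0 ≤ v r) :
    #{r ∈ B | c ≤ v r} * c ≤ ∑ r ∈ B, min (v r) c := by
  calc #{r ∈ B | c ≤ v r} * c = ∑ r ∈ B with c ≤ v r, min (v r) c := by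
        rw [sum_congr rfl fun r hr => min_eq_right (mem_filter.mp hr).2, sum_const, nsmul_eq_mul]
    _ ≤ ∑ r ∈ B, min (v r) c :=
        sum_le_sum_of_subset_of_nonneg (filter_subset _ _)
          fun r hr _ => le_min (hv r hr) hc

theorem sum_sub_card_filter_mul_le_sum_min {δ : ℝ} (hv : ∀ r ∈ B, v r ≤ c + δ) :
    ∑ r ∈ B, v r - #{r ∈ B | c ≤ v r} * δ ≤ ∑ r ∈ B, min (v r) c := by
  have hloss : (#{r ∈ B | c ≤ v r} : ℝ) * δ = ∑ r ∈ B, if c ≤ v r then δ else 0 := by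
    rw [← sum_filter, sum_const, nsmul_eq_mul]
  rw [hloss, ← sum_sub_distrib]
  refine sum_le_sum fun r hr => ?_
  split_ifs with h
  · linarith [hv r hr, min_eq_right h]
  · linarith [min_eq_left (not_le.mp h).le]

end Capping

theorem stmt_9 {ι : Type*} [DecidableEq ι] (C : Finset ι)
    (v : ι → ℝ) (hv0 : ∀ r ∈ C, 0 ≤ v r)
    (hthin : ∀ r ∈ C, v r < 6/23)
    (htotal : 1 ≤ ∑ r ∈ C, v r)
    (B : Finset ι) (hB : B ⊆ C)
    (huncov : ∑ r ∈ C \ B, v r < 6/23) :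
    1 - 4 * (6/23 : ℝ) / 3 ≤ ∑ r ∈ B, min (v r) (5 * (6/23) / 6) := by
  norm_num only
  have hcapped := card_filter_le_mul_le_sum_min B v (5/23) (by norm_num) fun r hr => hv0 r (hB hr)
  have hexcess := sum_sub_card_filter_mul_le_sum_min B v (5/23) (δ := 1/23)
    fun r hr => by linarith [hthin r (hB hr)]
  have hcovered : 17/23 < ∑ r ∈ B, v r := by linarith [sum_sdiff hB (f := v)]
  -- Both cases give exactly 15/23 = 3 · (5/23) = 17/23 - 2 · (1/23); this balance is what fixes λ = 6/23.
  rcases le_or_gt 3 #{r ∈ B | 5/23 ≤ v r} with hmany | hfew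
  · have : (3 : ℝ) ≤ #{r ∈ B | 5/23 ≤ v r} := by exact_mod_cast hmany
    linarith
  · have : (#{r ∈ B | 5/23 ≤ v r} : ℝ) ≤ 2 := by exact_mod_cast Nat.lt_succ_iff.mp hfew
    linarith
end

section
/- Let m ≥ 1. Define a well-founded relation on lists of positive natural numbers with sum ≤ m by: t ≺ s if either t = s ++ [k] for some k ≥ 1 with sum t ≤ m (Build), or t is obtained from a prefix of s by strictly decreasing the last retained entry (Contract). Then ≺ admits no infinite descending chain. -/
/-!
Pad a signature vector with `⊤` up to length `m` and compare such padded vectors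
lexicographically. A Build step turns the first `⊤` into a finite entry and a Contract step
strictly decreases an entry while keeping all earlier ones, so each step goes strictly down.
Since the entries are positive with sum at most `m`, the changed position is always below `m`,
and the lexicographic order on `Fin m → WithTop ℕ` is well-founded.
-/

/-- One step of the local search on signature vectors: `Build` appends a positive
entry (keeping the total sum at most `m`), `Contract` truncates the list and
strictly decreases the last retained entry. -/
def SigStep (m : ℕ) (t s : List ℕ) : Prop :=
  (∃ k : ℕ, 1 ≤ k ∧ t = s ++ [k] ∧ t.sum ≤ m) ∨
  (∃ (u : List ℕ) (a b : ℕ), a < b ∧ (u ++ [b]) <+: s ∧ t = u ++ [a])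

namespace List

variable {α : Type*}

def padTop (m : ℕ) (l : List α) : _root_.Lex (Fin m → WithTop α) :=
  toLex fun i => (l.map WithTop.some).getD i ⊤

theorem padTop_append_singleton_lt [LT α] {m : ℕ} {u s : List α} {a : α} (hu : u.length < m)
    (hpre : u <+: s) (ha : (a : WithTop α) < (s.map WithTop.some).getD u.length ⊤) :
    (u ++ [a]).padTop m < s.padTop m := by
  obtain ⟨r, rfl⟩ := hpre
  refine ⟨⟨u.length, hu⟩, fun j (hj : (j : ℕ) < u.length) => ?_, ?_⟩
  · replace hj : (j : ℕ) < (u.map WithTop.some).length := by simpa using hj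
    simp only [padTop, Pi.toLex_apply, map_append, getD_append _ _ _ _ hj]
  · simpa [padTop] using ha

end List

theorem SigStep.padTop_lt {m : ℕ} {t s : List ℕ} (h : SigStep m t s) (hpos : ∀ x ∈ t, 0 < x)
    (hsum : t.sum ≤ m) : t.padTop m < s.padTop m := by
  have hlen : t.length ≤ m := (t.length_le_sum_of_one_le hpos).trans hsum
  rcases h with ⟨k, -, rfl, -⟩ | ⟨u, a, b, hab, ⟨r, rfl⟩, rfl⟩
  · refine List.padTop_append_singleton_lt (by simp at hlen; omega) List.prefix_rfl ?_
    simp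
  · refine List.padTop_append_singleton_lt (by simp at hlen; omega)
      ((List.prefix_append u [b]).trans (List.prefix_append _ r)) ?_
    simpa [List.getD_append] using hab

theorem stmt_19_general (m : ℕ) :
    ¬ ∃ f : ℕ → List ℕ,
        (∀ n, (∀ x ∈ f n, 0 < x) ∧ (f n).sum ≤ m) ∧
        (∀ n, SigStep m (f (n + 1)) (f n)) := by
  rintro ⟨f, hf, hstep⟩
  exact not_strictAnti_of_wellFoundedLT (fun n => (f n).padTop m)
    (strictAnti_nat_of_succ_lt fun n => (hstep n).padTop_lt (hf _).1 (hf _).2)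

theorem stmt_19 (m : ℕ) (hm : 1 ≤ m) :
    ¬ ∃ f : ℕ → List ℕ,
        (∀ n, (∀ x ∈ f n, 0 < x) ∧ (f n).sum ≤ m) ∧
        (∀ n, SigStep m (f (n + 1)) (f n)) :=
  stmt_19_general m
end
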